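/- Let g: [0,1/4] → ℝ be measurable. There exists a probability density f on [0,1] with f(q₊(r)) − f(q₋(r)) = g(r) for almost every r ∈ [0,1/4] if and only if ∫₀^{1/4} |g(r)| (1−4r)^{−1/2} dr ≤ 1. Moreover, if equality holds, the realizing density is unique up to a.e. equality, with f(q₊(r)) = g⁺(r) and f(q₋(r)) = g⁻(r) almost everywhere. -/

import Mathlib

/-!
The substitution `r = q(1-q)` folds `[0,1]` twice onto `[0,1/4]`, with Jacobian
`(1-4r)^{-1/2}` on each branch, so `∫₀¹ f = ∫₀^{1/4} (f(q₊) + f(q₋)) (1-4r)^{-1/2}`.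
For a density `f ≥ 0` with `f(q₊) - f(q₋) = g` we have `|g| ≤ f(q₊) + f(q₋)`, which gives the
bound, and equality of the integrals forces `f(q₊) = g⁺`, `f(q₋) = g⁻` almost everywhere; since
the two branches cover `[0,1]`, this determines `f`. Conversely, putting `g⁺` on the upper
branch and `g⁻` on the lower one has total mass `∫ |g| (1-4r)^{-1/2}`, and a constant makes up
the rest.
-/

open MeasureTheory

/-- Upper branch of `q(1-q) = r`. -/
noncomputable def qPlus (r : ℝ) : ℝ := (1 + Real.sqrt (1 - 4*r)) / 2

/-- Lower branch of `q(1-q) = r`. -/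
noncomputable def qMinus (r : ℝ) : ℝ := (1 - Real.sqrt (1 - 4*r)) / 2

/-- `f` is a probability density on `[0,1]` realizing the branch asymmetry `g`. -/
def Realizes (f g : ℝ → ℝ) : Prop :=
  Measurable f ∧ (∀ q ∈ Set.Icc (0:ℝ) 1, 0 ≤ f q) ∧
    (∫ q in Set.Icc (0:ℝ) 1, f q = 1) ∧
    (∀ᵐ r ∂(volume.restrict (Set.Icc (0:ℝ) (1/4))), f (qPlus r) - f (qMinus r) = g r)

open Set
open scoped ENNReal

lemma qPlus_mul_one_sub {r : ℝ} (hr : r ≤ 1/4) : qPlus r * (1 - qPlus r) = r := by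
  have := Real.sq_sqrt (show (0:ℝ) ≤ 1 - 4*r by linarith)
  unfold qPlus; nlinarith

lemma qMinus_mul_one_sub {r : ℝ} (hr : r ≤ 1/4) : qMinus r * (1 - qMinus r) = r := by
  have := Real.sq_sqrt (show (0:ℝ) ≤ 1 - 4*r by linarith)
  unfold qMinus; nlinarith

lemma qPlus_mul_one_sub_self {q : ℝ} (hq : 1/2 ≤ q) : qPlus (q * (1 - q)) = q := by
  rw [qPlus, show 1 - 4 * (q * (1 - q)) = (2 * q - 1) ^ 2 by ring,
    Real.sqrt_sq (by linarith)]
  ring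

lemma qMinus_mul_one_sub_self {q : ℝ} (hq : q ≤ 1/2) : qMinus (q * (1 - q)) = q := by
  rw [qMinus, show 1 - 4 * (q * (1 - q)) = (1 - 2 * q) ^ 2 by ring,
    Real.sqrt_sq (by linarith)]
  ring

lemma qPlus_mem_Icc {r : ℝ} (hr : 0 ≤ r) : qPlus r ∈ Icc (0:ℝ) 1 := by
  have := Real.sqrt_le_one.2 (show 1 - 4*r ≤ 1 by linarith)
  have := Real.sqrt_nonneg (1 - 4*r)
  constructor <;> unfold qPlus <;> linarith

lemma qMinus_mem_Icc {r : ℝ} (hr : 0 ≤ r) : qMinus r ∈ Icc (0:ℝ) 1 := by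
  have := Real.sqrt_le_one.2 (show 1 - 4*r ≤ 1 by linarith)
  have := Real.sqrt_nonneg (1 - 4*r)
  constructor <;> unfold qMinus <;> linarith

lemma one_half_lt_qPlus {r : ℝ} (hr : r < 1/4) : 1/2 < qPlus r := by
  have := Real.sqrt_pos.2 (show 0 < 1 - 4*r by linarith)
  unfold qPlus; linarith

lemma qMinus_lt_one_half {r : ℝ} (hr : r < 1/4) : qMinus r < 1/2 := by
  have := Real.sqrt_pos.2 (show 0 < 1 - 4*r by linarith)
  unfold qMinus; linarith

lemma mul_one_sub_mem_Ico {q : ℝ} (hq : q ∈ Icc (0:ℝ) 1) (hq' : q ≠ 1/2) :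
    q * (1 - q) ∈ Ico (0:ℝ) (1/4) :=
  ⟨mul_nonneg hq.1 (by linarith [hq.2]),
    by nlinarith [sq_pos_of_ne_zero (sub_ne_zero.2 hq')]⟩

lemma qPlus_image_Ico : qPlus '' Ico (0:ℝ) (1/4) = Ioc (1/2) 1 := by
  ext q
  constructor
  · rintro ⟨r, hr, rfl⟩
    exact ⟨one_half_lt_qPlus hr.2, (qPlus_mem_Icc hr.1).2⟩
  · rintro ⟨hq₁, hq₂⟩
    exact ⟨q * (1 - q), mul_one_sub_mem_Ico ⟨by linarith, hq₂⟩ hq₁.ne',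
      qPlus_mul_one_sub_self hq₁.le⟩

lemma qMinus_image_Ico : qMinus '' Ico (0:ℝ) (1/4) = Ico 0 (1/2) := by
  ext q
  constructor
  · rintro ⟨r, hr, rfl⟩
    exact ⟨(qMinus_mem_Icc hr.1).1, qMinus_lt_one_half hr.2⟩
  · rintro ⟨hq₁, hq₂⟩
    exact ⟨q * (1 - q), mul_one_sub_mem_Ico ⟨hq₁, by linarith⟩ hq₂.ne,
      qMinus_mul_one_sub_self hq₂.le⟩

lemma injOn_qPlus : InjOn qPlus (Iic (1/4)) := fun a ha b hb h => by
  rw [← qPlus_mul_one_sub ha, h, qPlus_mul_one_sub hb]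

lemma injOn_qMinus : InjOn qMinus (Iic (1/4)) := fun a ha b hb h => by
  rw [← qMinus_mul_one_sub ha, h, qMinus_mul_one_sub hb]

lemma hasDerivAt_sqrt_one_sub_four_mul {r : ℝ} (hr : r < 1/4) :
    HasDerivAt (fun r => Real.sqrt (1 - 4*r)) (-2 * (Real.sqrt (1 - 4*r))⁻¹) r := by
  have hpos : 0 < 1 - 4*r := by linarith
  refine ((Real.hasDerivAt_sqrt hpos.ne').comp r
    (((hasDerivAt_id r).const_mul 4).const_sub 1)).congr_deriv ?_
  have := (Real.sqrt_pos.2 hpos).ne'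
  field_simp
  norm_num

lemma hasDerivAt_qPlus {r : ℝ} (hr : r < 1/4) :
    HasDerivAt qPlus (-(Real.sqrt (1 - 4*r))⁻¹) r :=
  (((hasDerivAt_sqrt_one_sub_four_mul hr).const_add 1).div_const 2).congr_deriv (by ring)

lemma hasDerivAt_qMinus {r : ℝ} (hr : r < 1/4) :
    HasDerivAt qMinus (Real.sqrt (1 - 4*r))⁻¹ r :=
  (((hasDerivAt_sqrt_one_sub_four_mul hr).const_sub 1).div_const 2).congr_deriv (by ring)

lemma measurable_qPlus : Measurable qPlus := by unfold qPlus; fun_prop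

lemma measurable_qMinus : Measurable qMinus := by unfold qMinus; fun_prop

lemma measurable_inv_sqrt_one_sub_four_mul :
    Measurable fun r : ℝ => (Real.sqrt (1 - 4*r))⁻¹ := by fun_prop

lemma lintegral_Ioc_eq_lintegral_qPlus (F : ℝ → ℝ≥0∞) :
    ∫⁻ q in Ioc (1/2) 1, F q
      = ∫⁻ r in Ico 0 (1/4), ENNReal.ofReal (Real.sqrt (1 - 4*r))⁻¹ * F (qPlus r) := by
  rw [← qPlus_image_Ico, lintegral_image_eq_lintegral_abs_deriv_mul measurableSet_Ico
    (fun r hr => (hasDerivAt_qPlus hr.2).hasDerivWithinAt)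
    (injOn_qPlus.mono fun r hr => hr.2.le) F]
  refine setLIntegral_congr_fun measurableSet_Ico fun r _ => ?_
  rw [abs_neg, abs_of_nonneg (inv_nonneg.2 (Real.sqrt_nonneg _))]

lemma lintegral_Ico_eq_lintegral_qMinus (F : ℝ → ℝ≥0∞) :
    ∫⁻ q in Ico 0 (1/2), F q
      = ∫⁻ r in Ico 0 (1/4), ENNReal.ofReal (Real.sqrt (1 - 4*r))⁻¹ * F (qMinus r) := by
  rw [← qMinus_image_Ico, lintegral_image_eq_lintegral_abs_deriv_mul measurableSet_Ico
    (fun r hr => (hasDerivAt_qMinus hr.2).hasDerivWithinAt)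
    (injOn_qMinus.mono fun r hr => hr.2.le) F]
  refine setLIntegral_congr_fun measurableSet_Ico fun r _ => ?_
  rw [abs_of_nonneg (inv_nonneg.2 (Real.sqrt_nonneg _))]

lemma lintegral_Icc_zero_one_eq_branches {F : ℝ → ℝ≥0∞} (hF : Measurable F) :
    ∫⁻ q in Icc 0 1, F q = ∫⁻ r in Icc 0 (1/4),
      ENNReal.ofReal (Real.sqrt (1 - 4*r))⁻¹ * (F (qPlus r) + F (qMinus r)) := by
  have hminus : Measurable fun r => ENNReal.ofReal (Real.sqrt (1 - 4*r))⁻¹ * F (qMinus r) :=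
    measurable_inv_sqrt_one_sub_four_mul.ennreal_ofReal.mul (hF.comp measurable_qMinus)
  rw [← Icc_union_Ioc_eq_Icc (by norm_num : (0:ℝ) ≤ 1/2) (by norm_num : (1/2:ℝ) ≤ 1),
    lintegral_union measurableSet_Ioc
      ((Iic_disjoint_Ioi le_rfl).mono Icc_subset_Iic_self Ioc_subset_Ioi_self),
    setLIntegral_congr Ico_ae_eq_Icc.symm, lintegral_Ico_eq_lintegral_qMinus,
    lintegral_Ioc_eq_lintegral_qPlus, ← lintegral_add_left hminus, setLIntegral_congr Ico_ae_eq_Icc]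
  exact lintegral_congr fun r => by ring

lemma lintegral_inv_sqrt_one_sub_four_mul :
    ∫⁻ r in Icc 0 (1/4), ENNReal.ofReal (Real.sqrt (1 - 4*r))⁻¹ = 1/2 := by
  have h := lintegral_Icc_zero_one_eq_branches (F := fun _ => 1) measurable_const
  rw [setLIntegral_one, Real.volume_Icc, sub_zero, ENNReal.ofReal_one, one_add_one_eq_two,
    lintegral_mul_const _ measurable_inv_sqrt_one_sub_four_mul.ennreal_ofReal] at h
  rw [ENNReal.eq_div_iff two_ne_zero ENNReal.ofNat_ne_top, mul_comm, h]

lemma ae_mem_Ico_zero_one_fourth :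
    ∀ᵐ r ∂volume.restrict (Icc (0:ℝ) (1/4)), r ∈ Ico 0 (1/4) := by
  rw [← Measure.restrict_congr_set Ico_ae_eq_Icc]
  exact ae_restrict_mem measurableSet_Ico

lemma ae_restrict_Icc_zero_one_of_branches {p : ℝ → Prop} (hp : MeasurableSet {q | p q})
    (h : ∀ᵐ r ∂volume.restrict (Icc (0:ℝ) (1/4)), p (qPlus r) ∧ p (qMinus r)) :
    ∀ᵐ q ∂volume.restrict (Icc (0:ℝ) 1), p q := by
  have hnp : MeasurableSet {q | ¬p q} := hp.compl
  rw [ae_iff, ← lintegral_indicator_one hnp,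
    lintegral_Icc_zero_one_eq_branches (measurable_one.indicator hnp)]
  refine (lintegral_congr_ae ?_).trans lintegral_zero
  filter_upwards [h] with r ⟨hplus, hminus⟩
  simp [hplus, hminus]

lemma ofReal_abs_sub_mul_le {a b w : ℝ} (ha : 0 ≤ a) (hb : 0 ≤ b) (hw : 0 ≤ w) :
    ENNReal.ofReal (|a - b| * w) ≤ ENNReal.ofReal w * (ENNReal.ofReal a + ENNReal.ofReal b) := by
  rw [← ENNReal.ofReal_add ha hb, ← ENNReal.ofReal_mul hw, mul_comm]
  gcongr
  simpa [abs_of_nonneg ha, abs_of_nonneg hb] using abs_sub a b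

lemma eq_max_zero_of_ofReal_abs_sub_mul_eq {a b w : ℝ} (ha : 0 ≤ a) (hb : 0 ≤ b) (hw : 0 < w)
    (h : ENNReal.ofReal (|a - b| * w) = ENNReal.ofReal w * (ENNReal.ofReal a + ENNReal.ofReal b)) :
    a = max (a - b) 0 ∧ b = max (-(a - b)) 0 := by
  rw [← ENNReal.ofReal_add ha hb, ← ENNReal.ofReal_mul hw.le, mul_comm,
    ENNReal.ofReal_eq_ofReal_iff (by positivity) (by positivity),
    mul_right_inj' hw.ne'] at h
  rcases abs_cases (a - b) with ⟨habs, hab⟩ | ⟨habs, hab⟩ <;> rw [habs] at h <;>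
    constructor <;> simp only [max_def] <;> split_ifs <;> linarith

noncomputable def branchMass (g : ℝ → ℝ) : ℝ≥0∞ :=
  ∫⁻ r in Icc 0 (1/4), ENNReal.ofReal (|g r| * (Real.sqrt (1 - 4*r))⁻¹)

namespace Realizes

variable {f g : ℝ → ℝ}

lemma lintegral_ofReal_eq_one (hf : Realizes f g) :
    ∫⁻ q in Icc 0 1, ENNReal.ofReal (f q) = 1 := by
  obtain ⟨-, hf_nonneg, hf_int, -⟩ := hf
  have hf_integrable : IntegrableOn f (Icc 0 1) :=
    Integrable.of_integral_ne_zero (by rw [hf_int]; exact one_ne_zero)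
  rw [← ofReal_integral_eq_lintegral_ofReal hf_integrable
    (ae_restrict_of_forall_mem measurableSet_Icc hf_nonneg), hf_int, ENNReal.ofReal_one]

lemma lintegral_branches_eq_one (hf : Realizes f g) :
    ∫⁻ r in Icc 0 (1/4), ENNReal.ofReal (Real.sqrt (1 - 4*r))⁻¹ *
      (ENNReal.ofReal (f (qPlus r)) + ENNReal.ofReal (f (qMinus r))) = 1 :=
  (lintegral_Icc_zero_one_eq_branches hf.1.ennreal_ofReal).symm.trans hf.lintegral_ofReal_eq_one

lemma ae_le_branches (hf : Realizes f g) :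
    (fun r => ENNReal.ofReal (|g r| * (Real.sqrt (1 - 4*r))⁻¹))
      ≤ᵐ[volume.restrict (Icc 0 (1/4))] fun r => ENNReal.ofReal (Real.sqrt (1 - 4*r))⁻¹ *
        (ENNReal.ofReal (f (qPlus r)) + ENNReal.ofReal (f (qMinus r))) := by
  filter_upwards [hf.2.2.2, ae_restrict_mem measurableSet_Icc] with r hgr hr
  rw [← hgr]
  exact ofReal_abs_sub_mul_le (hf.2.1 _ (qPlus_mem_Icc hr.1)) (hf.2.1 _ (qMinus_mem_Icc hr.1))
    (inv_nonneg.2 (Real.sqrt_nonneg _))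

lemma branchMass_le_one (hf : Realizes f g) : branchMass g ≤ 1 :=
  (lintegral_mono_ae hf.ae_le_branches).trans_eq hf.lintegral_branches_eq_one

lemma ae_branches_eq_max_zero (hf : Realizes f g) (hg : branchMass g = 1) :
    ∀ᵐ r ∂volume.restrict (Icc (0:ℝ) (1/4)),
      f (qPlus r) = max (g r) 0 ∧ f (qMinus r) = max (-g r) 0 := by
  have hmeas : AEMeasurable (fun r => ENNReal.ofReal (Real.sqrt (1 - 4*r))⁻¹ *
      (ENNReal.ofReal (f (qPlus r)) + ENNReal.ofReal (f (qMinus r))))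
      (volume.restrict (Icc 0 (1/4))) :=
    (measurable_inv_sqrt_one_sub_four_mul.ennreal_ofReal.mul
      ((hf.1.comp measurable_qPlus).ennreal_ofReal.add
        (hf.1.comp measurable_qMinus).ennreal_ofReal)).aemeasurable
  have heq := ae_eq_of_ae_le_of_lintegral_le hf.ae_le_branches (hg.trans_ne ENNReal.one_ne_top)
    hmeas (hf.lintegral_branches_eq_one.trans hg.symm).le
  filter_upwards [heq, hf.2.2.2, ae_mem_Ico_zero_one_fourth] with r hr hgr hIco
  rw [← hgr] at hr ⊢
  exact eq_max_zero_of_ofReal_abs_sub_mul_eq (hf.2.1 _ (qPlus_mem_Icc hIco.1))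
    (hf.2.1 _ (qMinus_mem_Icc hIco.1)) (inv_pos.2 (Real.sqrt_pos.2 (by linarith [hIco.2]))) hr

lemma ae_eq_of_branchMass_eq_one {f' : ℝ → ℝ} (hf : Realizes f g) (hf' : Realizes f' g)
    (hg : branchMass g = 1) : ∀ᵐ q ∂volume.restrict (Icc (0:ℝ) 1), f q = f' q := by
  refine ae_restrict_Icc_zero_one_of_branches (measurableSet_eq_fun hf.1 hf'.1) ?_
  filter_upwards [hf.ae_branches_eq_max_zero hg, hf'.ae_branches_eq_max_zero hg]
    with r ⟨hplus, hminus⟩ ⟨hplus', hminus'⟩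
  exact ⟨hplus.trans hplus'.symm, hminus.trans hminus'.symm⟩

end Realizes

lemma ofReal_mul_max_zero_add_add_max_neg_zero_add {a c w : ℝ} (hc : 0 ≤ c) (hw : 0 ≤ w) :
    ENNReal.ofReal w * (ENNReal.ofReal (max a 0 + c) + ENNReal.ofReal (max (-a) 0 + c))
      = ENNReal.ofReal (|a| * w) + ENNReal.ofReal c * (2 * ENNReal.ofReal w) := by
  have key : w * (max a 0 + c + (max (-a) 0 + c)) = |a| * w + c * (2 * w) := by
    rw [← max_zero_add_max_neg_zero_eq_abs_self]; ring
  rw [← ENNReal.ofReal_add (by positivity) (by positivity), ← ENNReal.ofReal_mul hw, key,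
    ENNReal.ofReal_add (by positivity) (by positivity), ENNReal.ofReal_mul hc,
    ENNReal.ofReal_mul zero_le_two, ENNReal.ofReal_ofNat]

-- Since `q ↦ q(1-q)` inverts `qPlus` on `[1/2,1]` and `qMinus` on `[0,1/2]`, this is `g⁺ + c`
-- on the upper branch and `g⁻ + c` on the lower one.
noncomputable def branchDensity (g : ℝ → ℝ) (c q : ℝ) : ℝ :=
  (if 1/2 ≤ q then max (g (q * (1 - q))) 0 else max (-g (q * (1 - q))) 0) + c

section branchDensity

variable {g : ℝ → ℝ} {c : ℝ}

lemma measurable_branchDensity (hg : Measurable g) : Measurable (branchDensity g c) := by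
  have hgq : Measurable fun q : ℝ => g (q * (1 - q)) := hg.comp (by fun_prop)
  exact (Measurable.ite (measurableSet_le measurable_const measurable_id)
    (hgq.max measurable_const) (hgq.neg.max measurable_const)).add_const c

lemma branchDensity_nonneg (hc : 0 ≤ c) (q : ℝ) : 0 ≤ branchDensity g c q := by
  unfold branchDensity; split_ifs <;> positivity

lemma branchDensity_qPlus {r : ℝ} (hr : r ≤ 1/4) :
    branchDensity g c (qPlus r) = max (g r) 0 + c := by
  rw [branchDensity, if_pos (by unfold qPlus; linarith [Real.sqrt_nonneg (1 - 4*r)]),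
    qPlus_mul_one_sub hr]

lemma branchDensity_qMinus {r : ℝ} (hr : r < 1/4) :
    branchDensity g c (qMinus r) = max (-g r) 0 + c := by
  rw [branchDensity, if_neg (qMinus_lt_one_half hr).not_ge, qMinus_mul_one_sub hr.le]

lemma lintegral_branchDensity (hg : Measurable g) (hc : 0 ≤ c) :
    ∫⁻ q in Icc 0 1, ENNReal.ofReal (branchDensity g c q) = branchMass g + ENNReal.ofReal c := by
  have hw := measurable_inv_sqrt_one_sub_four_mul.ennreal_ofReal
  rw [lintegral_Icc_zero_one_eq_branches (measurable_branchDensity hg).ennreal_ofReal]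
  calc _ = ∫⁻ r in Icc 0 (1/4), ENNReal.ofReal (|g r| * (Real.sqrt (1 - 4*r))⁻¹)
          + ENNReal.ofReal c * (2 * ENNReal.ofReal (Real.sqrt (1 - 4*r))⁻¹) := by
        refine lintegral_congr_ae ?_
        filter_upwards [ae_mem_Ico_zero_one_fourth] with r hr
        rw [branchDensity_qPlus hr.2.le, branchDensity_qMinus hr.2]
        exact ofReal_mul_max_zero_add_add_max_neg_zero_add hc (inv_nonneg.2 (Real.sqrt_nonneg _))
    _ = branchMass g + ENNReal.ofReal c * (2 * (1/2)) := by
        have hgw : Measurable fun r => ENNReal.ofReal (|g r| * (Real.sqrt (1 - 4*r))⁻¹) :=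
          (hg.abs.mul measurable_inv_sqrt_one_sub_four_mul).ennreal_ofReal
        rw [lintegral_add_left hgw,
          lintegral_const_mul _ (hw.const_mul 2), lintegral_const_mul _ hw,
          lintegral_inv_sqrt_one_sub_four_mul, branchMass]
    _ = _ := by rw [one_div, ENNReal.mul_inv_cancel two_ne_zero ENNReal.ofNat_ne_top, mul_one]

lemma realizes_branchDensity (hg : Measurable g) (hI : branchMass g ≤ 1) :
    Realizes (branchDensity g (1 - branchMass g).toReal) g := by
  have hmeas := measurable_branchDensity (c := (1 - branchMass g).toReal) hg
  have hnonneg := branchDensity_nonneg (g := g) (ENNReal.toReal_nonneg (a := 1 - branchMass g))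
  refine ⟨hmeas, fun q _ => hnonneg q, ?_, ?_⟩
  · rw [integral_eq_lintegral_of_nonneg_ae (ae_of_all _ hnonneg) hmeas.aestronglyMeasurable,
      lintegral_branchDensity hg ENNReal.toReal_nonneg,
      ENNReal.ofReal_toReal (ENNReal.sub_ne_top ENNReal.one_ne_top), add_tsub_cancel_of_le hI,
      ENNReal.toReal_one]
  · filter_upwards [ae_mem_Ico_zero_one_fourth] with r hr
    rw [branchDensity_qPlus hr.2.le, branchDensity_qMinus hr.2, add_sub_add_right_eq_sub,
      max_zero_sub_max_neg_zero_eq_self]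

end branchDensity

/-- Branch-asymmetry realizability: a measurable `g` on `[0,1/4]` is the branch
asymmetry of some probability density on `[0,1]` iff `∫ |g|(1−4r)^{−1/2} ≤ 1`; in the
saturated case the realizing density is the positive/negative part configuration,
uniquely up to a.e. equality. -/
theorem stmt15 (g : ℝ → ℝ) (hg : Measurable g) :
    ((∃ f : ℝ → ℝ, Realizes f g) ↔
      ∫⁻ r in Set.Icc (0:ℝ) (1/4),
        ENNReal.ofReal (|g r| * (Real.sqrt (1 - 4*r))⁻¹) ≤ 1) ∧
    ((∫⁻ r in Set.Icc (0:ℝ) (1/4),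
        ENNReal.ofReal (|g r| * (Real.sqrt (1 - 4*r))⁻¹) = 1) →
      ∀ f : ℝ → ℝ, Realizes f g →
        (∀ᵐ r ∂(volume.restrict (Set.Icc (0:ℝ) (1/4))),
          f (qPlus r) = max (g r) 0 ∧ f (qMinus r) = max (-g r) 0) ∧
        ∀ f' : ℝ → ℝ, Realizes f' g →
          (∀ᵐ q ∂(volume.restrict (Set.Icc (0:ℝ) 1)), f q = f' q)) := by
  refine ⟨⟨fun ⟨_, hf⟩ => hf.branchMass_le_one, fun hI => ⟨_, realizes_branchDensity hg hI⟩⟩, ?_⟩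
  intro hI f hf
  exact ⟨hf.ae_branches_eq_max_zero hI, fun f' hf' => hf.ae_eq_of_branchMass_eq_one hf' hI⟩
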